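/- arXiv:2603.04167 — 3 statements merged into one kernel-verified Lean document; each statement's English description precedes it below -/
import Mathlib

section
/- Let $k$ be a field of characteristic $p > 0$. Then the polynomials $f(t) = t^{p^2}$ and $g(t) = t^{p(p+1)} + t$ satisfy $k[f(t), g(t)] = k[t]$, i.e., every polynomial in $k[t]$ can be written as a polynomial in $f(t)$ and $g(t)$ with coefficients in $k$. -/
/-!
With `f = t^(p^2)` and `g = t^(p(p+1)) + t`, Frobenius gives `g^p = f^(p+1) + t^p`, so `t^p` lies in
`k[f, g]`, and then so does `t = g - (t^p)^(p+1)`.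
-/

open Polynomial

theorem mem_of_pow_sq_mem_of_pow_mul_succ_add_mem {A S : Type*} [CommRing A] [SetLike S A]
    [SubringClass S A] (s : S) (p : ℕ) [ExpChar A p] {x : A} (hf : x ^ p ^ 2 ∈ s)
    (hg : x ^ (p * (p + 1)) + x ∈ s) : x ∈ s := by
  have hxp : x ^ p ∈ s := by
    have frobenius : (x ^ (p * (p + 1)) + x) ^ p - (x ^ p ^ 2) ^ (p + 1) = x ^ p := by
      rw [add_pow_expChar, ← pow_mul, ← pow_mul]
      ring_nf
    exact frobenius ▸ sub_mem (pow_mem hg p) (pow_mem hf (p + 1))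
  have hx : x ^ (p * (p + 1)) + x - (x ^ p) ^ (p + 1) = x := by
    rw [← pow_mul]
    ring
  exact hx ▸ sub_mem hg (pow_mem hxp (p + 1))

/-- Let `k` be a field of characteristic `p > 0`. Then the polynomials
`f(t) = t^(p^2)` and `g(t) = t^(p(p+1)) + t` generate the polynomial ring `k[t]` as a
`k`-algebra, i.e. `k[f, g] = k[t]`. -/
theorem stmt_0 (k : Type*) [Field k] (p : ℕ) (hp : 0 < p) [CharP k p] :
    Algebra.adjoin k {(X ^ p ^ 2 : k[X]), X ^ (p * (p + 1)) + X} = ⊤ := by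
  have : Fact p.Prime := ⟨(CharP.char_is_prime_or_zero k p).resolve_right hp.ne'⟩
  rw [eq_top_iff, ← adjoin_X, Algebra.adjoin_le_iff, Set.singleton_subset_iff]
  exact mem_of_pow_sq_mem_of_pow_mul_succ_add_mem _ p
    (Algebra.subset_adjoin (by simp)) (Algebra.subset_adjoin (by simp))
end

section
/- Let $k$ be a field. For any coprime integers $r, s \geq 2$ and any $n \geq 1$, there exist $f, g \in k[w]$ with $f(0)^r + g(0)^s = 0$, $f(0), g(0)$ units, and $w^n \mid f(w)^r + g(w)^s + w$ in $k[w]$. -/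
open Polynomial


/-- Binomial expansion to second order. -/
lemma pow_add_expand {R : Type*} [CommRing R] (a b : R) (r : ℕ) :
    ∃ c, (a + b) ^ r = a ^ r + (r : R) * a ^ (r - 1) * b + b ^ 2 * c := by
  induction r with
  | zero => exact ⟨0, by simp⟩
  | succ m ih =>
    obtain ⟨c, hc⟩ := ih
    rcases Nat.eq_zero_or_pos m with hm | hm
    · subst hm; exact ⟨0, by push_cast; ring⟩
    · obtain ⟨m', rfl⟩ := Nat.exists_eq_add_of_le hm
      refine ⟨(1 + m' : ℕ) * a ^ m' + c * (a + b), ?_⟩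
      rw [pow_succ, hc]
      simp only [Nat.add_sub_cancel_left, Nat.add_sub_cancel]
      push_cast
      ring

/-- Lifting step: if `X^n ∣ p^r + q`, `p(0) ≠ 0` and `r ≠ 0` in `k`, we can adjust `p`
by a multiple of `X^n` to get divisibility by `X^(n+1)`. -/
lemma step_lift {k : Type*} [Field k] (r n : ℕ) (hn : 1 ≤ n) (hr : (r : k) ≠ 0)
    (p q : k[X]) (hp : p.eval 0 ≠ 0) (hd : X ^ n ∣ p ^ r + q) :
    ∃ p' : k[X], p'.eval 0 = p.eval 0 ∧ X ^ (n + 1) ∣ p' ^ r + q := by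
  obtain ⟨h, hh⟩ := hd
  set a := p.eval 0 with ha
  have hne : (r : k) * a ^ (r - 1) ≠ 0 := mul_ne_zero hr (pow_ne_zero _ hp)
  set t : k := -(h.eval 0) / ((r : k) * a ^ (r - 1)) with ht
  refine ⟨p + C t * X ^ n, ?_, ?_⟩
  · simp [ha, zero_pow (by omega : n ≠ 0)]
  obtain ⟨c, hc⟩ := pow_add_expand p (C t * X ^ n) r
  have key : (p + C t * X ^ n) ^ r + q
      = X ^ n * (h + (r : k[X]) * p ^ (r - 1) * C t) + X ^ (2 * n) * ((C t) ^ 2 * c) := by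
    rw [hc]
    linear_combination hh
  rw [key]
  refine dvd_add ?_ (Dvd.dvd.mul_right (pow_dvd_pow X (by omega)) _)
  rw [pow_succ]
  refine mul_dvd_mul_left _ ?_
  rw [X_dvd_iff, Polynomial.coeff_zero_eq_eval_zero]
  simp only [eval_add, eval_mul, eval_natCast, eval_pow, eval_C, ← ha]
  rw [ht]
  field_simp
  ring

/-- Let `k` be a field, `r, s ≥ 2` coprime integers and `n ≥ 1`. Then there
exist polynomials `f, g ∈ k[w]` with `f(0)^r + g(0)^s = 0`, `f(0)` and `g(0)` units, such that
`w^n` divides `f(w)^r + g(w)^s + w` in `k[w]`. -/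
theorem stmt_3 (k : Type*) [Field k] (r s : ℕ) (hr : 2 ≤ r) (hs : 2 ≤ s)
    (hco : Nat.Coprime r s) (n : ℕ) (hn : 1 ≤ n) :
    ∃ f g : k[X], f.eval 0 ^ r + g.eval 0 ^ s = 0 ∧ IsUnit (f.eval 0) ∧ IsUnit (g.eval 0) ∧
      X ^ n ∣ f ^ r + g ^ s + X := by
  induction n, hn using Nat.le_induction with
  | base =>
    have hpar : Odd r ∨ Odd s := by
      by_contra hpar
      push_neg at hpar
      simp only [Nat.not_odd_iff_even] at hpar
      have : 2 ∣ Nat.gcd r s := Nat.dvd_gcd hpar.1.two_dvd hpar.2.two_dvd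
      rw [hco] at this
      omega
    obtain ⟨a, b, hab⟩ : ∃ a b : k, a ≠ 0 ∧ b ≠ 0 ∧ a ^ r + b ^ s = 0 := by
      rcases hpar with ho | ho
      · exact ⟨-1, 1, by simp, by simp, by simp [ho.neg_one_pow]⟩
      · exact ⟨1, -1, by simp, by simp, by simp [ho.neg_one_pow]⟩
    refine ⟨C a, C b, by simpa using hab.2.2, by simp [isUnit_iff_ne_zero, hab.1],
      by simp [isUnit_iff_ne_zero, hab.2.1], ?_⟩
    have : (C a : k[X]) ^ r + C b ^ s + X = X := by
      rw [← map_pow, ← map_pow, ← map_add, hab.2.2, map_zero, zero_add]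
    rw [this, pow_one]
  | succ n hn ih =>
    obtain ⟨f, g, he, huf, hug, hdvd⟩ := ih
    have key : (r : k) ≠ 0 ∨ (s : k) ≠ 0 := by
      by_contra hkey
      push_neg at hkey
      have h1 : ringChar k ∣ r := (ringChar.spec k r).mp hkey.1
      have h2 : ringChar k ∣ s := (ringChar.spec k s).mp hkey.2
      have : ringChar k ∣ Nat.gcd r s := Nat.dvd_gcd h1 h2
      rw [hco] at this
      exact CharP.ringChar_ne_one (Nat.dvd_one.mp this)
    rcases key with hk | hk
    · have hd' : X ^ n ∣ f ^ r + (g ^ s + X) := by rwa [← add_assoc]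
      obtain ⟨f', hf'0, hf'd⟩ := step_lift r n hn hk f (g ^ s + X) huf.ne_zero hd'
      exact ⟨f', g, by rwa [hf'0], by rwa [hf'0], hug, by rwa [add_assoc]⟩
    · have hd' : X ^ n ∣ g ^ s + (f ^ r + X) := by
        have e : f ^ r + g ^ s + X = g ^ s + (f ^ r + X) := by ring
        rwa [e] at hdvd
      obtain ⟨g', hg'0, hg'd⟩ := step_lift s n hn hk g (f ^ r + X) hug.ne_zero hd'
      refine ⟨f, g', by rwa [hg'0], huf, by rwa [hg'0], ?_⟩
      have e : f ^ r + g' ^ s + X = g' ^ s + (f ^ r + X) := by ring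
      rwa [e]
end

section
/- In the Milnor-Witt K-theory $K^{MW}_*(F)$ of a field $F$, define $\langle a \rangle = 1 + \eta[a] \in K^{MW}_0(F)$ for $a \in F^\times$, and $\epsilon = -\langle -1 \rangle$. Then for homogeneous elements $\alpha \in K^{MW}_n(F)$ and $\beta \in K^{MW}_m(F)$ with $\alpha, \beta$ products of symbols $[a_i]$, one has $\alpha \beta = \epsilon^{mn} \beta \alpha$ ($\epsilon$-graded commutativity). In particular $[a][b] = \epsilon [b][a]$ for all $a, b \in F^\times$. -/
/-! Milnor–Witt K-theory of a field `F`, presented (following Morel) as the ring generated by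
symbols `[a]` for `a ∈ Fˣ` together with an element `η`, subject to the relations
(1) `[a][1-a] = 0` for `a ≠ 0, 1` (Steinberg relation);
(2) `[ab] = [a] + [b] + η[a][b]`;
(3) `η[a] = [a]η`;
(4) `η(η[-1] + 2) = 0`.
We realize it as a quotient of the free (noncommutative) `ℤ`-algebra on the set
`Option Fˣ`, where `some a` corresponds to the symbol `[a]` and `none` to `η`. -/

namespace MWK

variable (F : Type*) [Field F]

/-- Morel's defining relations for Milnor–Witt K-theory. -/
inductive Rel : FreeAlgebra ℤ (Option Fˣ) → FreeAlgebra ℤ (Option Fˣ) → Prop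
  | steinberg (a : Fˣ) (h : (a : F) ≠ 1) :
      Rel (FreeAlgebra.ι ℤ (Option.some a) *
        FreeAlgebra.ι ℤ (Option.some (Units.mk0 ((1 : F) - a) (sub_ne_zero.mpr (Ne.symm h))))) 0
  | mul (a b : Fˣ) :
      Rel (FreeAlgebra.ι ℤ (Option.some (a * b)))
        (FreeAlgebra.ι ℤ (Option.some a) + FreeAlgebra.ι ℤ (Option.some b) +
          FreeAlgebra.ι ℤ (Option.none : Option Fˣ) * FreeAlgebra.ι ℤ (Option.some a) *
            FreeAlgebra.ι ℤ (Option.some b))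
  | etaComm (a : Fˣ) :
      Rel (FreeAlgebra.ι ℤ (Option.none : Option Fˣ) * FreeAlgebra.ι ℤ (Option.some a))
        (FreeAlgebra.ι ℤ (Option.some a) * FreeAlgebra.ι ℤ (Option.none : Option Fˣ))
  | hyperbolic :
      Rel (FreeAlgebra.ι ℤ (Option.none : Option Fˣ) *
        (FreeAlgebra.ι ℤ (Option.none : Option Fˣ) * FreeAlgebra.ι ℤ (Option.some (-1 : Fˣ)) + 2))
        0

/-- Milnor–Witt K-theory of the field `F`, presented by Morel's generators and relations. -/
abbrev MW := RingQuot (Rel F)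

/-- The Milnor–Witt symbol `[a]`, for a unit `a` of `F`. -/
def symbol (a : Fˣ) : MW F :=
  RingQuot.mkRingHom (Rel F) (FreeAlgebra.ι ℤ (Option.some a))

/-- The Hopf element `η` of Milnor–Witt K-theory. -/
def eta : MW F :=
  RingQuot.mkRingHom (Rel F) (FreeAlgebra.ι ℤ (Option.none : Option Fˣ))

end MWK

set_option linter.dupNamespace false

namespace MWK

/-- Abstract data of a ring satisfying Morel's Milnor–Witt relations. -/
structure MWData (F : Type*) [Field F] (R : Type*) [Ring R] where
  s : Fˣ → R
  e : R
  st : ∀ a b : Fˣ, (a : F) + b = 1 → s a * s b = 0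
  mul_rel : ∀ a b : Fˣ, s (a * b) = s a + s b + e * s a * s b
  e_comm : ∀ a : Fˣ, e * s a = s a * e
  hyp : e * (e * s (-1) + 2) = 0

namespace MWData

variable {F R : Type*} [Field F] [Ring R] (D : MWData F R)

/-- `⟨a⟩ = 1 + η[a]`. -/
def g (a : Fˣ) : R := 1 + D.e * D.s a

-- symmetry of η[a][b]
lemma sym (a b : Fˣ) : D.e * (D.s a * D.s b) = D.e * (D.s b * D.s a) := by
  have h1 := D.mul_rel a b
  have h2 := D.mul_rel b a
  rw [mul_comm b a] at h2
  have h3 := h1.symm.trans h2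
  rw [add_comm (D.s b) (D.s a)] at h3
  have h4 := add_left_cancel h3
  rw [mul_assoc, mul_assoc] at h4
  exact h4

lemma e_s (x : Fˣ) : D.s x * D.e = D.e * D.s x := (D.e_comm x).symm

lemma e_s' (x : Fˣ) (y : R) : D.s x * (D.e * y) = D.e * (D.s x * y) := by
  rw [← mul_assoc, D.e_s, mul_assoc]

lemma g_s (c x : Fˣ) : D.s x * D.g c = D.g c * D.s x := by
  unfold g
  rw [mul_add, add_mul, mul_one, one_mul]
  congr 1
  rw [D.e_s', D.sym x c, ← mul_assoc]

lemma g_s' (c x : Fˣ) (y : R) : D.s x * (D.g c * y) = D.g c * (D.s x * y) := by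
  rw [← mul_assoc, D.g_s, mul_assoc]

lemma e_g (c : Fˣ) : D.g c * D.e = D.e * D.g c := by
  unfold g
  rw [mul_add, add_mul, mul_one, one_mul, mul_assoc, ← D.e_s, ← mul_assoc]

lemma g_mul (a b : Fˣ) : D.g (a * b) = D.g a * D.g b := by
  unfold g
  rw [D.mul_rel]
  simp only [mul_add, add_mul, mul_one, one_mul, D.e_s', D.e_s, mul_assoc]
  abel

lemma g_g (c d : Fˣ) (y : R) : D.g c * (D.g d * y) = D.g d * (D.g c * y) := by
  rw [← mul_assoc, ← D.g_mul, mul_comm c d, D.g_mul, mul_assoc]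

lemma e_e_neg_one : D.e * D.e * D.s (-1) = -(2 * D.e) := by
  have h := D.hyp
  rw [mul_add, ← mul_assoc] at h
  have h2 : D.e * 2 = 2 * D.e := by rw [two_mul, mul_two]
  rw [h2] at h
  exact eq_neg_of_add_eq_zero_left h

lemma s_one_aux : D.s 1 + D.e * D.s (-1) * D.s 1 = 0 := by
  have h := D.mul_rel (-1 : Fˣ) 1
  rw [mul_one, add_assoc] at h
  exact (left_eq_add.mp h)

lemma e_s_one : D.e * D.s 1 = 0 := by
  have h := congrArg (D.e * ·) D.s_one_aux
  simp only [mul_add, mul_zero] at h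
  rw [← mul_assoc, ← mul_assoc, D.e_e_neg_one] at h
  have hx : -(D.e * D.s 1) = D.e * D.s 1 + -(2 * D.e) * D.s 1 := by
    rw [neg_mul, mul_assoc, two_mul]; abel
  rw [← hx] at h
  exact neg_eq_zero.mp h

lemma s_one : D.s 1 = 0 := by
  have h := D.s_one_aux
  rw [D.e_comm, mul_assoc, D.e_s_one, mul_zero, add_zero] at h
  exact h

lemma g_one : D.g 1 = 1 := by
  unfold g
  rw [D.s_one, mul_zero, add_zero]

lemma g_neg_one_sq : D.g (-1) * D.g (-1) = 1 := by
  rw [← D.g_mul, neg_mul_neg, one_mul, D.g_one]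

lemma g_neg_sq' (y : R) : D.g (-1) * (D.g (-1) * y) = y := by
  rw [← mul_assoc, D.g_neg_one_sq, one_mul]

lemma inv_eq (a : Fˣ) : D.g a * D.s a⁻¹ = -(D.s a) := by
  have h := D.mul_rel a a⁻¹
  rw [mul_inv_cancel, D.s_one, add_assoc] at h
  have h2 := eq_neg_of_add_eq_zero_right h.symm
  unfold g
  rw [add_mul, one_mul]
  exact h2

lemma s_inv (a : Fˣ) : D.s a⁻¹ = -(D.g a⁻¹ * D.s a) :=
  calc D.s a⁻¹ = (D.g a⁻¹ * D.g a) * D.s a⁻¹ := by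
        rw [← D.g_mul, inv_mul_cancel, D.g_one, one_mul]
    _ = D.g a⁻¹ * (D.g a * D.s a⁻¹) := mul_assoc _ _ _
    _ = D.g a⁻¹ * -(D.s a) := by rw [D.inv_eq]
    _ = -(D.g a⁻¹ * D.s a) := mul_neg _ _

lemma s_mul' (x y : Fˣ) : D.s (x * y) = D.s x + D.g x * D.s y := by
  rw [D.mul_rel]
  unfold g
  rw [add_mul, one_mul, add_assoc]

lemma st_inv (a b : Fˣ) (hab : (a : F) + b = 1) : D.s a * D.s (-b * a⁻¹) = 0 := by
  have hb0 : (b : F) ≠ 0 := b.ne_zero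
  have ha0 : (a : F) ≠ 0 := a.ne_zero
  have h0 : ((a⁻¹ : Fˣ) : F) + ((-b * a⁻¹ : Fˣ) : F) = 1 := by
    simp only [Units.val_mul, Units.val_neg, Units.val_inv_eq_inv_val]
    field_simp
    linear_combination (-1 : F) * hab
  have h1 := D.st a⁻¹ (-b * a⁻¹) h0
  have h2 : D.s a = -(D.g a * D.s a⁻¹) := by rw [D.inv_eq, neg_neg]
  rw [h2, neg_mul, mul_assoc, h1, mul_zero, neg_zero]

lemma neg_self (a : Fˣ) : D.s a * D.s (-a) = 0 := by
  by_cases h1 : (a : F) = 1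
  · have ha : a = 1 := Units.ext (by simpa using h1)
    rw [ha, D.s_one, zero_mul]
  · set b : Fˣ := Units.mk0 ((1 : F) - a) (sub_ne_zero.mpr (Ne.symm h1)) with hbdef
    have hab : (a : F) + b = 1 := by
      rw [hbdef, Units.val_mk0]; ring
    have hst := D.st a b hab
    have hc := D.st_inv a b hab
    have hkey : -a = b * (-b * a⁻¹)⁻¹ := by
      rw [eq_mul_inv_iff_mul_eq, ← mul_assoc, neg_mul_neg, mul_comm a b, mul_assoc,
        mul_inv_cancel, mul_one]
    rw [hkey, D.s_mul' b (-b * a⁻¹)⁻¹, D.s_inv (-b * a⁻¹)]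
    simp only [mul_neg, mul_add, D.g_s', hc, hst, mul_zero, neg_zero, add_zero, zero_add]

lemma sq (a : Fˣ) : D.s a * D.s a = D.s a * D.s (-1) := by
  have h : a = (-1 : Fˣ) * (-a) := by rw [neg_mul_neg, one_mul]
  nth_rewrite 2 [h]
  rw [D.s_mul', mul_add, D.g_s', D.neg_self, mul_zero, add_zero]

lemma g_self (a : Fˣ) : D.g a * D.s a = D.g (-1) * D.s a := by
  rw [← D.g_s, ← D.g_s]
  unfold g
  rw [mul_add, mul_add, mul_one, D.e_s', D.e_s', D.sq]

lemma g_self' (x : Fˣ) (y : R) : D.g x * (D.s x * y) = D.g (-1) * (D.s x * y) := by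
  rw [← mul_assoc, D.g_self, mul_assoc]

lemma key1 (a : Fˣ) : D.s a * D.s (-1) + D.g (-1) * (D.s a * D.s (-1)) = 0 := by
  have h := D.neg_self a
  rw [show (-a : Fˣ) = (-1 : Fˣ) * a by rw [neg_mul, one_mul], D.s_mul'] at h
  rw [mul_add, D.g_s'] at h
  rw [D.sq] at h
  exact h

lemma main2 (a b : Fˣ) : D.s a * D.s b = -(D.g (-1)) * (D.s b * D.s a) := by
  have h0 : D.s (a * b) * D.s (b * -a) = 0 := by
    rw [show b * -a = -(a * b) by rw [mul_neg, mul_comm]]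
    exact D.neg_self (a * b)
  have hna : D.s (-a : Fˣ) = D.s (-1) + D.g (-1) * D.s a := by
    rw [show (-a : Fˣ) = (-1 : Fˣ) * a by rw [neg_mul, one_mul], D.s_mul']
  rw [D.s_mul' a b, D.s_mul' b (-a), hna] at h0
  simp only [mul_add, add_mul, mul_assoc, D.g_s'] at h0
  rw [D.sq b, D.sq a] at h0
  have hT6 : D.g a * (D.g b * (D.g (-1) * (D.s b * D.s a))) = D.g (-1) * (D.s b * D.s a) := by
    rw [D.g_g b (-1), D.g_self' b, D.g_neg_sq']
    calc D.g a * (D.s b * D.s a) = (D.g a * D.s b) * D.s a := (mul_assoc _ _ _).symm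
      _ = (D.s b * D.g a) * D.s a := by rw [D.g_s]
      _ = D.s b * (D.g a * D.s a) := mul_assoc _ _ _
      _ = D.s b * (D.g (-1) * D.s a) := by rw [D.g_self]
      _ = D.g (-1) * (D.s b * D.s a) := D.g_s' _ _ _
  rw [hT6] at h0
  have hT34 : D.g a * (D.s b * D.s (-1)) + D.g a * (D.g b * (D.s b * D.s (-1))) = 0 := by
    rw [D.g_self' b, ← mul_add, D.key1 b, mul_zero]
  have hT35 : D.g b * (D.s a * D.s (-1)) + D.g b * (D.g (-1) * (D.s a * D.s (-1))) = 0 := by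
    rw [← mul_add, D.key1 a, mul_zero]
  rw [show D.s a * D.s b + D.g a * (D.s b * D.s (-1)) +
      (D.g b * (D.s a * D.s (-1)) + D.g a * (D.g b * (D.s b * D.s (-1))) +
        (D.g b * (D.g (-1) * (D.s a * D.s (-1))) + D.g (-1) * (D.s b * D.s a))) =
      (D.s a * D.s b + D.g (-1) * (D.s b * D.s a)) +
        ((D.g a * (D.s b * D.s (-1)) + D.g a * (D.g b * (D.s b * D.s (-1)))) +
          (D.g b * (D.s a * D.s (-1)) + D.g b * (D.g (-1) * (D.s a * D.s (-1))))) from by abel]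
    at h0
  rw [hT34, hT35, add_zero, add_zero] at h0
  rw [neg_mul]
  exact eq_neg_of_add_eq_zero_left h0

lemma comm_eps_s (x : Fˣ) : Commute (-(D.g (-1))) (D.s x) :=
  Commute.neg_left ((D.g_s (-1) x).symm)

lemma eps_pow_s (n : ℕ) (x : Fˣ) (y : R) :
    D.s x * ((-(D.g (-1))) ^ n * y) = (-(D.g (-1))) ^ n * (D.s x * y) := by
  rw [← mul_assoc, ← ((D.comm_eps_s x).pow_left n).eq, mul_assoc]

lemma one_list (a : Fˣ) (M : List Fˣ) :
    D.s a * (M.map D.s).prod =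
      (-(D.g (-1))) ^ M.length * ((M.map D.s).prod * D.s a) := by
  induction M with
  | nil => simp
  | cons b M ih =>
    simp only [List.map_cons, List.prod_cons, List.length_cons]
    calc D.s a * (D.s b * (M.map D.s).prod)
        = (D.s a * D.s b) * (M.map D.s).prod := (mul_assoc _ _ _).symm
      _ = (-(D.g (-1)) * (D.s b * D.s a)) * (M.map D.s).prod := by rw [D.main2]
      _ = -(D.g (-1)) * (D.s b * (D.s a * (M.map D.s).prod)) := by
          rw [mul_assoc, mul_assoc]
      _ = -(D.g (-1)) * (D.s b * ((-(D.g (-1))) ^ M.length *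
            ((M.map D.s).prod * D.s a))) := by rw [ih]
      _ = -(D.g (-1)) * ((-(D.g (-1))) ^ M.length *
            (D.s b * ((M.map D.s).prod * D.s a))) := by rw [D.eps_pow_s]
      _ = (-(D.g (-1))) ^ (M.length + 1) * (D.s b * (M.map D.s).prod * D.s a) := by
          rw [pow_succ', mul_assoc, mul_assoc]

lemma main1 (L M : List Fˣ) :
    (L.map D.s).prod * (M.map D.s).prod =
      (-(D.g (-1))) ^ (M.length * L.length) *
        ((M.map D.s).prod * (L.map D.s).prod) := by
  induction L with
  | nil => simp
  | cons a L ih =>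
    simp only [List.map_cons, List.prod_cons, List.length_cons]
    calc (D.s a * (L.map D.s).prod) * (M.map D.s).prod
        = D.s a * ((L.map D.s).prod * (M.map D.s).prod) := mul_assoc _ _ _
      _ = D.s a * ((-(D.g (-1))) ^ (M.length * L.length) *
            ((M.map D.s).prod * (L.map D.s).prod)) := by rw [ih]
      _ = (-(D.g (-1))) ^ (M.length * L.length) *
            (D.s a * ((M.map D.s).prod * (L.map D.s).prod)) := by rw [D.eps_pow_s]
      _ = (-(D.g (-1))) ^ (M.length * L.length) *
            ((D.s a * (M.map D.s).prod) * (L.map D.s).prod) := by rw [mul_assoc]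
      _ = (-(D.g (-1))) ^ (M.length * L.length) *
            (((-(D.g (-1))) ^ M.length * ((M.map D.s).prod * D.s a)) *
              (L.map D.s).prod) := by rw [D.one_list]
      _ = (-(D.g (-1))) ^ (M.length * L.length) * ((-(D.g (-1))) ^ M.length *
            ((M.map D.s).prod * (D.s a * (L.map D.s).prod))) := by
          rw [mul_assoc, mul_assoc]
      _ = (-(D.g (-1))) ^ (M.length * (L.length + 1)) *
            ((M.map D.s).prod * (D.s a * (L.map D.s).prod)) := by
          rw [← mul_assoc, ← pow_add, Nat.mul_add, Nat.mul_one]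

end MWData

variable {F : Type*} [Field F]

lemma rel_eq {x y : FreeAlgebra ℤ (Option Fˣ)} (h : Rel F x y) :
    RingQuot.mkRingHom (Rel F) x = RingQuot.mkRingHom (Rel F) y :=
  RingQuot.mkRingHom_rel h

lemma e_comm' (a : Fˣ) : eta F * symbol F a = symbol F a * eta F := by
  have h := rel_eq (Rel.etaComm (F := F) a)
  simpa only [map_mul, symbol, eta] using h

lemma mul_rel' (a b : Fˣ) :
    symbol F (a * b) =
      symbol F a + symbol F b + eta F * symbol F a * symbol F b := by
  have h := rel_eq (Rel.mul (F := F) a b)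
  simpa only [map_mul, map_add, symbol, eta] using h

lemma steinberg_rel' (a : Fˣ) (h : (a : F) ≠ 1) :
    symbol F a *
      symbol F (Units.mk0 ((1 : F) - a) (sub_ne_zero.mpr (Ne.symm h))) = 0 := by
  have h2 := rel_eq (Rel.steinberg (F := F) a h)
  simpa only [map_mul, map_zero, symbol] using h2

lemma hyp_rel' : eta F * (eta F * symbol F (-1) + 2) = 0 := by
  have h := rel_eq (Rel.hyperbolic (F := F))
  simpa only [map_mul, map_add, map_zero, map_ofNat, symbol, eta] using h

lemma st_rel (a b : Fˣ) (hab : (a : F) + b = 1) :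
    symbol F a * symbol F b = 0 := by
  have ha : (a : F) ≠ 1 := by
    intro h
    rw [h] at hab
    exact b.ne_zero (by linear_combination hab)
  have hb : b = Units.mk0 ((1 : F) - a) (sub_ne_zero.mpr (Ne.symm ha)) := by
    apply Units.ext
    simp only [Units.val_mk0]
    linear_combination hab
  rw [hb]; exact steinberg_rel' a ha

/-- The canonical `MWData` structure on `MW F`. -/
def mwData (F : Type*) [Field F] : MWData F (MW F) :=
  { s := symbol F
    e := eta F
    st := st_rel
    mul_rel := mul_rel'
    e_comm := e_comm'
    hyp := hyp_rel' }

end MWK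


/-- (`ε`-graded commutativity of Milnor–Witt K-theory.)  With
`⟨a⟩ = 1 + η[a]` and `ε = -⟨-1⟩`: if `α` is a product of `n` symbols and `β` is a product of
`m` symbols, then `αβ = ε^(mn) βα`; in particular `[a][b] = ε [b][a]` for all units `a, b`. -/
theorem stmt_6 (F : Type*) [Field F] :
    (∀ L M : List Fˣ,
      (L.map (MWK.symbol F)).prod * (M.map (MWK.symbol F)).prod =
        (-(1 + MWK.eta F * MWK.symbol F (-1))) ^ (M.length * L.length) *
          ((M.map (MWK.symbol F)).prod * (L.map (MWK.symbol F)).prod)) ∧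
    (∀ a b : Fˣ,
      MWK.symbol F a * MWK.symbol F b =
        -(1 + MWK.eta F * MWK.symbol F (-1)) * (MWK.symbol F b * MWK.symbol F a)) := by
  refine ⟨fun L M => ?_, fun a b => ?_⟩
  · exact (MWK.mwData F).main1 L M
  · exact (MWK.mwData F).main2 a b
end
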